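/- arXiv:1310.2277 — 5 statements merged into one kernel-verified Lean document; each statement's English description precedes it below -/
import Mathlib

section
/- If H is a subgroup of a finite abelian group G, and D(G) denotes the maximum size of a subset of G containing no three-term arithmetic progression (three distinct elements a, b, c with a + c = b + b), then D(G) ≤ |G| · D(H) / |H|. -/
/-!
Averaging over translates: for every `g : G`, the set of `h ∈ H` with `g + h ∈ A` is the
preimage of `A` under the injective affine map `h ↦ g + h`, hence progression-free, so it has at
most `D(H)` elements. Summing over `g`, each element of `A` is hit exactly `|H|` times, so
`|A| · |H| ≤ |G| · D(H)`.
-/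

open Finset

/-- A finset `A` in an additive group is free of three-term arithmetic progressions:
no three distinct elements `a, b, c ∈ A` satisfy `a + c = b + b`. -/
def APFree {G : Type*} [AddCommGroup G] (A : Finset G) : Prop :=
  ∀ a ∈ A, ∀ b ∈ A, ∀ c ∈ A, a ≠ b → a ≠ c → b ≠ c → a + c ≠ b + b

theorem APFree.filter_add_map_mem {G H : Type*} [AddCommGroup G] [AddCommGroup H] [Fintype H]
    [DecidableEq G] {A : Finset G} (hA : APFree A) (φ : H →+ G) (hφ : Function.Injective φ)
    (g : G) : APFree (univ.filter fun h => g + φ h ∈ A) := by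
  intro a ha b hb c hc hab hac hbc habc
  simp only [mem_filter, mem_univ, true_and] at ha hb hc
  have hinj : Function.Injective fun h => g + φ h := (add_right_injective g).comp hφ
  refine hA _ ha _ hb _ hc (hinj.ne hab) (hinj.ne hac) (hinj.ne hbc) ?_
  have := congrArg φ habc
  simp only [map_add] at this
  rw [add_add_add_comm, this, add_add_add_comm g (φ b)]

theorem sum_card_filter_add_mem {G ι : Type*} [AddCommGroup G] [Fintype G] [DecidableEq G]
    [Fintype ι] (A : Finset G) (φ : ι → G) :
    ∑ g : G, #(univ.filter fun i => g + φ i ∈ A) = Fintype.card ι * #A := by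
  have translate : ∀ x : G, #(univ.filter fun g : G => g + x ∈ A) = #A := fun x => by
    rw [← card_map (Equiv.addRight x).toEmbedding]
    congr 1
    ext y
    simp [Equiv.addRight]
  simp only [card_filter]
  rw [sum_comm]
  simp only [← card_filter, translate, sum_const, card_univ, smul_eq_mul]

theorem subgroup_bound_for_AP_free_sets
    {G : Type*} [AddCommGroup G] [Fintype G] [DecidableEq G]
    (H : AddSubgroup G) (DG DH : ℕ)
    (hDG : IsGreatest {k : ℕ | ∃ A : Finset G, APFree A ∧ A.card = k} DG)
    (hDH : IsGreatest {k : ℕ | ∃ B : Finset H, APFree B ∧ B.card = k} DH) :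
    DG * Nat.card H ≤ Fintype.card G * DH := by
  obtain ⟨⟨A, hA, rfl⟩, -⟩ := hDG
  have := Fintype.ofFinite H
  have htranslate (g : G) : #(univ.filter fun h : H => g + h ∈ A) ≤ DH :=
    hDH.2 ⟨_, hA.filter_add_map_mem H.subtype H.subtype_injective g, rfl⟩
  calc #A * Nat.card H = ∑ g : G, #(univ.filter fun h : H => g + h ∈ A) := by
        rw [sum_card_filter_add_mem, Nat.card_eq_fintype_card, mul_comm]
    _ ≤ ∑ _g : G, DH := sum_le_sum fun g _ => htranslate g
    _ = Fintype.card G * DH := by rw [sum_const, card_univ, smul_eq_mul]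
end

section
/- Let A ⊆ ℕ be a set of nonnegative integers containing no three-term arithmetic progression (no distinct x, y, z ∈ A with x + z = 2y). Then the set G = {n ≥ 1 : for every prime p, v_p(n) ∈ A} contains no three-term geometric progression with integer ratio, i.e., there are no n ∈ G and integer r ≥ 2 with n, n·r, n·r² all in G. -/
/-! At any prime `p ∣ r`, the exponents of `p` in `n`, `n r`, `n r²` are `v`, `v + k`, `v + 2k`
with `k = v_p(r) ≥ 1`: a nontrivial three-term arithmetic progression in `A`. -/

theorem Nat.factorization_mul_pow_apply {n r : ℕ} (hn : n ≠ 0) (hr : r ≠ 0) (k p : ℕ) :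
    (n * r ^ k).factorization p = n.factorization p + k * r.factorization p := by
  rw [Nat.factorization_mul hn (pow_ne_zero k hr), Nat.factorization_pow]
  rfl

theorem rankin_set_free_of_integer_ratio_GPs
    (A : Set ℕ)
    (hA : ∀ x ∈ A, ∀ y ∈ A, ∀ z ∈ A, x ≠ y → x ≠ z → y ≠ z → x + z ≠ 2 * y) :
    ¬ ∃ (n r : ℕ), 1 ≤ n ∧ 2 ≤ r ∧
      (∀ p : ℕ, p.Prime → n.factorization p ∈ A) ∧
      (∀ p : ℕ, p.Prime → (n * r).factorization p ∈ A) ∧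
      (∀ p : ℕ, p.Prime → (n * r ^ 2).factorization p ∈ A) := by
  rintro ⟨n, r, hn, hr, h0, h1, h2⟩
  have hn0 : n ≠ 0 := by omega
  have hr0 : r ≠ 0 := by omega
  obtain ⟨p, hp, hpr⟩ := Nat.exists_prime_and_dvd (show r ≠ 1 by omega)
  have hk : 1 ≤ r.factorization p := (hp.dvd_iff_one_le_factorization hr0).mp hpr
  have hv1 := h1 p hp
  have hv2 := h2 p hp
  rw [← pow_one r, Nat.factorization_mul_pow_apply hn0 hr0] at hv1
  rw [Nat.factorization_mul_pow_apply hn0 hr0] at hv2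
  exact hA _ (h0 p hp) _ hv1 _ hv2 (by omega) (by omega) (by omega) (by ring)
end

section
/- Let A ⊆ ℕ be a set of nonnegative integers containing no three-term arithmetic progression. Then the set G = {n ≥ 1 : for every prime p, v_p(n) ∈ A} contains no three-term geometric progression with rational ratio: there are no distinct a, b, c ∈ G with a·c = b². -/
/-! Comparing `p`-adic valuations in `a * c = b ^ 2` gives `v_p(a) + v_p(c) = 2 v_p(b)` for every
prime `p`, and since `a ≠ c` some prime separates `v_p(a)` from `v_p(c)`: at that prime the three
valuations form a nontrivial arithmetic progression inside `A`. -/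

theorem Nat.factorization_add_eq_two_mul_of_mul_eq_sq {a b c : ℕ} (ha : a ≠ 0) (hc : c ≠ 0)
    (h : a * c = b ^ 2) (p : ℕ) :
    a.factorization p + c.factorization p = 2 * b.factorization p := by
  simpa [Nat.factorization_mul ha hc, Nat.factorization_pow] using
    congrArg (fun n => n.factorization p) h

theorem Nat.exists_prime_factorization_ne {a c : ℕ} (ha : a ≠ 0) (hc : c ≠ 0) (hac : a ≠ c) :
    ∃ p, p.Prime ∧ a.factorization p ≠ c.factorization p := by
  obtain ⟨p, hp⟩ : ∃ p, a.factorization p ≠ c.factorization p := by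
    by_contra! h
    exact hac (Nat.eq_of_factorization_eq ha hc h)
  refine ⟨p, ?_, hp⟩
  by_contra hp'
  simp [Nat.factorization_eq_zero_of_not_prime _ hp'] at hp

theorem rankin_set_free_of_rational_ratio_GPs
    (A : Set ℕ)
    (hA : ∀ x ∈ A, ∀ y ∈ A, ∀ z ∈ A, x ≠ y → x ≠ z → y ≠ z → x + z ≠ 2 * y) :
    ¬ ∃ (a b c : ℕ), 1 ≤ a ∧ 1 ≤ b ∧ 1 ≤ c ∧
      (∀ p : ℕ, p.Prime → a.factorization p ∈ A) ∧
      (∀ p : ℕ, p.Prime → b.factorization p ∈ A) ∧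
      (∀ p : ℕ, p.Prime → c.factorization p ∈ A) ∧
      a ≠ b ∧ a ≠ c ∧ b ≠ c ∧ a * c = b ^ 2 := by
  rintro ⟨a, b, c, ha, -, hc, hfa, hfb, hfc, -, hac, -, heq⟩
  obtain ⟨p, hp, hne⟩ := Nat.exists_prime_factorization_ne (by omega) (by omega) hac
  have hsum := Nat.factorization_add_eq_two_mul_of_mul_eq_sq (by omega) (by omega) heq p
  exact hA _ (hfa p hp) _ (hfb p hp) _ (hfc p hp) (by omega) hne (by omega) hsum
end

section
/- For every real N ≥ 72, the set S = {n ∈ ℕ : N/9 < n ≤ N/8} ∪ {n ∈ ℕ : N/4 < n ≤ N} contains no three-term geometric progression with integer ratio. -/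
/-!
Every element of `S = (N/9, N/8] ∪ (N/4, N]` lies in `(N/9, N]`, so a progression
`n, nr, nr²` in `S` has `r² < 9`, i.e. `r = 2`. But `n, 2n, 4n` cannot all lie in `S`:
`2n > 2N/9 > N/8` forces `2n > N/4`, hence `n > N/8` puts `n` in the upper interval,
and then `4n > N`.
-/

/-- Membership in the set `(N/9, N/8] ∪ (N/4, N]` for a natural number. -/
def InS (N : ℝ) (m : ℕ) : Prop :=
  (N / 9 < (m : ℝ) ∧ (m : ℝ) ≤ N / 8) ∨ (N / 4 < (m : ℝ) ∧ (m : ℝ) ≤ N)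

namespace InS

variable {N : ℝ} {m n r : ℕ}

theorem zero_lt (h : InS N m) : 0 < N := by
  rcases h with ⟨h₁, h₂⟩ | ⟨h₁, h₂⟩ <;> linarith

theorem div_nine_lt (h : InS N m) : N / 9 < m := by
  have := h.zero_lt
  rcases h with ⟨h₁, -⟩ | ⟨h₁, -⟩ <;> linarith

theorem le_self (h : InS N m) : (m : ℝ) ≤ N := by
  have := h.zero_lt
  rcases h with ⟨-, h₂⟩ | ⟨-, h₂⟩ <;> linarith

theorem ratio_eq_two (hn : InS N n) (hnr : InS N (n * r ^ 2)) (hr : 2 ≤ r) : r = 2 := by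
  have hn_pos : (0 : ℝ) < n := lt_trans (div_pos hn.zero_lt (by norm_num)) hn.div_nine_lt
  have hle := hnr.le_self
  push_cast at hle
  have hsq : (n : ℝ) * r ^ 2 < n * 3 ^ 2 := by linarith [hn.div_nine_lt]
  have : r < 3 := by
    have := lt_of_mul_lt_mul_left hsq hn_pos.le
    exact_mod_cast (pow_lt_pow_iff_left₀ (Nat.cast_nonneg r) (by norm_num) two_ne_zero).1 this
  omega

theorem not_doubling_chain (hn : InS N n) (h₂ : InS N (2 * n)) (h₄ : InS N (4 * n)) : False := by
  have hN := hn.zero_lt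
  have h₄_le := h₄.le_self
  have h₂_upper : N / 4 < (2 * n : ℕ) := by
    rcases h₂ with ⟨-, h⟩ | ⟨h, -⟩
    · have := hn.div_nine_lt
      push_cast at h
      linarith
    · exact h
  push_cast at h₂_upper h₄_le
  rcases hn with ⟨-, h⟩ | ⟨h, -⟩ <;> linarith

end InS

theorem union_of_intervals_free_of_integer_ratio_GPs_general (N : ℝ) :
    ¬ ∃ (n r : ℕ), 1 ≤ n ∧ 2 ≤ r ∧
      InS N n ∧ InS N (n * r) ∧ InS N (n * r ^ 2) := by
  rintro ⟨n, r, -, hr, hn, hnr, hnr2⟩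
  obtain rfl := InS.ratio_eq_two hn hnr2 hr
  have h₄ : n * 2 ^ 2 = 4 * n := by ring
  rw [mul_comm] at hnr
  rw [h₄] at hnr2
  exact InS.not_doubling_chain hn hnr hnr2

theorem union_of_intervals_free_of_integer_ratio_GPs (N : ℝ) (hN : 72 ≤ N) :
    ¬ ∃ (n r : ℕ), 1 ≤ n ∧ 2 ≤ r ∧
      InS N n ∧ InS N (n * r) ∧ InS N (n * r ^ 2) :=
  union_of_intervals_free_of_integer_ratio_GPs_general N
end

section
/- If m, n are positive integers with m dividing n, then λ(m)/m ≥ λ(n)/n, where λ is the Carmichael function (the exponent of the group (ℤ/nℤ)×). -/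
/-!
Reduction modulo `m` is a surjection `(ZMod n)ˣ → (ZMod m)ˣ`; call its kernel `K`. Raising to
the power `λ(m)` lands in `K`, so `λ(n) ∣ λ(m) · |K|`. On the other hand `u ↦ u - 1` embeds `K`
into the kernel of the additive reduction `ZMod n → ZMod m`, which has `n / m` elements, so
`|K| · m ≤ n`.
-/

theorem Monoid.exponent_dvd_exponent_mul_card_ker {G H : Type*} [Group G] [Group H]
    (f : G →* H) : Monoid.exponent G ∣ Monoid.exponent H * Nat.card f.ker := by
  refine Monoid.exponent_dvd_of_forall_pow_eq_one fun g ↦ ?_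
  have hg : g ^ Monoid.exponent H ∈ f.ker := by
    rw [MonoidHom.mem_ker, map_pow, Monoid.pow_exponent_eq_one]
  rw [pow_mul]
  exact congrArg Subtype.val (pow_card_eq_one' (x := (⟨_, hg⟩ : f.ker)))

theorem AddMonoidHom.card_mul_card_ker_of_surjective {G H : Type*} [AddGroup G] [AddGroup H]
    (f : G →+ H) (hf : Function.Surjective f) : Nat.card H * Nat.card f.ker = Nat.card G := by
  rw [← f.ker.card_mul_index, AddSubgroup.index_ker, AddMonoidHom.range_eq_top.mpr hf,
    AddSubgroup.card_top, mul_comm]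

theorem Units.card_ker_map_le_card_ker {R S : Type*} [Ring R] [Ring S] [Finite R] (f : R →+* S) :
    Nat.card (Units.map (f : R →* S)).ker ≤ Nat.card (f : R →+ S).ker := by
  refine Nat.card_le_card_of_injective (fun u ↦ ⟨(u : Rˣ) - 1, ?_⟩) fun u v huv ↦ ?_
  · have hu : f (u : Rˣ) = 1 := congrArg Units.val u.2
    simp [AddMonoidHom.mem_ker, hu]
  · exact Subtype.ext (Units.ext (sub_left_inj.mp (congrArg Subtype.val huv)))

theorem carmichael_ratio_antitone_general (m n : ℕ) (hn : 0 < n) (hmn : m ∣ n) :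
    Monoid.exponent (ZMod n)ˣ * m ≤ Monoid.exponent (ZMod m)ˣ * n := by
  have : NeZero n := ⟨hn.ne'⟩
  have : NeZero m := ⟨(Nat.pos_of_dvd_of_pos hmn hn).ne'⟩
  set f := ZMod.castHom hmn (ZMod m)
  set K := (ZMod.unitsMap hmn).ker
  have hexp : Monoid.exponent (ZMod n)ˣ ≤ Monoid.exponent (ZMod m)ˣ * Nat.card K :=
    Nat.le_of_dvd (Nat.mul_pos (Nat.pos_of_ne_zero Monoid.exponent_ne_zero_of_finite)
      Nat.card_pos) (Monoid.exponent_dvd_exponent_mul_card_ker _)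
  have hK : Nat.card K * m ≤ n := by
    have hcard :=
      (f : ZMod n →+ ZMod m).card_mul_card_ker_of_surjective (ZMod.ringHom_surjective f)
    rw [Nat.card_zmod, Nat.card_zmod] at hcard
    calc Nat.card K * m ≤ Nat.card (f : ZMod n →+ ZMod m).ker * m :=
          Nat.mul_le_mul_right m (Units.card_ker_map_le_card_ker f)
      _ = n := by rw [mul_comm, hcard]
  calc Monoid.exponent (ZMod n)ˣ * m ≤ Monoid.exponent (ZMod m)ˣ * Nat.card K * m := by gcongr
    _ ≤ Monoid.exponent (ZMod m)ˣ * n := by rw [mul_assoc]; gcongr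

theorem carmichael_ratio_antitone (m n : ℕ) (hm : 0 < m) (hn : 0 < n) (hmn : m ∣ n) :
    Monoid.exponent (ZMod n)ˣ * m ≤ Monoid.exponent (ZMod m)ˣ * n :=
  carmichael_ratio_antitone_general m n hn hmn
end
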